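/- Fix 0 < δ < 1. There exists a constant C₁ > 0, depending only on δ (in particular independent of t and Λ), such that for all t > 1, all Λ with 0 ≤ Λ ≤ (t^{1−δ}−1)/λ_c − 1, and all r > 0: |Φ(r e^{iπ/4}; t, Λ)| ≤ C₁·|Φ(0; t, Λ)|. -/

import Mathlib

open MeasureTheory

noncomputable section

/-- The unit direction `e^{iπ/4}`. -/
def e4 : ℂ := Complex.exp (Complex.I * (Real.pi / 4 : ℝ))

/-- `λ_c := t^(δ-1)/(1-t^(δ-1))`. -/
def lamc (δ t : ℝ) : ℝ := t ^ (δ - 1) / (1 - t ^ (δ - 1))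

/-- The exponential factor `exp((i λ_c t/2)(v² + (2 ln(1+Λ)/(1+λ_c))·v))`. -/
def phase (δ t Λ : ℝ) (v : ℂ) : ℂ :=
  Complex.exp (Complex.I * ((lamc δ t * t / 2 : ℝ) : ℂ) *
    (v ^ 2 + ((2 * Real.log (1 + Λ) / (1 + lamc δ t) : ℝ) : ℂ) * v))

/-- `Φ(u;t,Λ)`: integral of the phase over the ray `{u + r e^{iπ/4} : r ≥ 0}`. -/
def Phi (δ t Λ : ℝ) (u : ℂ) : ℂ :=
  ∫ r in Set.Ioi (0 : ℝ), e4 * phase δ t Λ (u + (r : ℂ) * e4)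

/-! Along the ray `s ↦ s e^{iπ/4}` the phase is `e^{-(c s² + b s)} e^{i b s}` with
`c = λ_c t / 2 > 0` and `b ≥ 0`. Hence `|Φ(r e^{iπ/4})| ≤ J := ∫₀^∞ e^{-(c s² + b s)} ds`, because
`e^{-(c (s+r)² + b (s+r))} ≤ e^{-b r} e^{-(c s² + b s)}`, while
`|Φ(0)| ≥ Re (e^{-iπ/4} Φ(0)) = ∫₀^∞ e^{-(c s² + b s)} cos (b s) ds`. The same shift inequality says
that the part of `J` beyond `b s = θ` is at most `e^{-θ} J`; as the cosine is at least `√2/2` up to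
`b s = π/4` and nonnegative up to `b s = π/2`, the cosine integral is at least
`(√2/2 (1 - e^{-π/4}) - e^{-π/2}) J`, a positive multiple of `J` independent of `t` and `Λ`. -/

open MeasureTheory Set Real

def dampedGaussian (c b s : ℝ) : ℝ := Real.exp (-(c * s ^ 2 + b * s))

section DampedGaussian

variable {c b : ℝ}

lemma dampedGaussian_pos (c b s : ℝ) : 0 < dampedGaussian c b s := Real.exp_pos _

lemma integrable_dampedGaussian (hc : 0 < c) (b : ℝ) : Integrable (dampedGaussian c b) := by
  convert (integrable_cexp_quadratic (b := c) (by simpa using hc) (-b) 0).norm using 2 with s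
  rw [Complex.norm_exp, show -(c : ℂ) * s ^ 2 + -b * s + 0 = ((-(c * s ^ 2 + b * s) : ℝ) : ℂ) by
    push_cast; ring, Complex.ofReal_re, dampedGaussian]

lemma dampedGaussian_add_le (hc : 0 ≤ c) {s r : ℝ} (hs : 0 ≤ s) (hr : 0 ≤ r) :
    dampedGaussian c b (s + r) ≤ Real.exp (-(b * r)) * dampedGaussian c b s := by
  rw [dampedGaussian, dampedGaussian, ← Real.exp_add, Real.exp_le_exp]
  nlinarith [mul_nonneg hc (mul_nonneg hs hr), mul_nonneg hc (mul_nonneg hr hr)]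

lemma setIntegral_Ioi_comp_add_right {E : Type*} [NormedAddCommGroup E] [NormedSpace ℝ E]
    (f : ℝ → E) (a r : ℝ) : ∫ s in Ioi a, f (s + r) = ∫ s in Ioi (a + r), f s := by
  simpa using (measurePreserving_add_right volume r).setIntegral_preimage_emb
    (measurableEmbedding_addRight r) f (Ioi (a + r))

lemma setIntegral_dampedGaussian_add_le (hc : 0 < c) {r : ℝ} (hr : 0 ≤ r) :
    ∫ s in Ioi 0, dampedGaussian c b (s + r)
      ≤ Real.exp (-(b * r)) * ∫ s in Ioi 0, dampedGaussian c b s := by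
  rw [← integral_const_mul]
  refine setIntegral_mono_on ?_ ((integrable_dampedGaussian hc b).const_mul _).integrableOn
    measurableSet_Ioi fun s hs => dampedGaussian_add_le hc.le (le_of_lt hs) hr
  exact ((integrable_dampedGaussian hc b).comp_add_right r).integrableOn

lemma setIntegral_Ioi_dampedGaussian_le (hc : 0 < c) {r : ℝ} (hr : 0 ≤ r) :
    ∫ s in Ioi r, dampedGaussian c b s
      ≤ Real.exp (-(b * r)) * ∫ s in Ioi 0, dampedGaussian c b s := by
  simpa [setIntegral_Ioi_comp_add_right] using setIntegral_dampedGaussian_add_le (b := b) hc hr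

lemma sub_indicator_le_dampedGaussian_mul_cos (hb : 0 ≤ b) {s₁ s : ℝ} (hs₁ : b * s₁ = π / 4)
    (hs : 0 ≤ s) :
    √2 / 2 * dampedGaussian c b s - √2 / 2 * (Ioi s₁).indicator (dampedGaussian c b) s
      - (Ioi (2 * s₁)).indicator (dampedGaussian c b) s
      ≤ dampedGaussian c b s * Real.cos (b * s) := by
  have hg := dampedGaussian_pos c b s
  have hbs : 0 ≤ b * s := mul_nonneg hb hs
  rcases le_or_gt s s₁ with h₁ | h₁
  · have hcos : √2 / 2 ≤ Real.cos (b * s) := by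
      rw [← cos_pi_div_four, ← hs₁]
      exact cos_le_cos_of_nonneg_of_le_pi hbs (by linarith [pi_pos])
        (mul_le_mul_of_nonneg_left h₁ hb)
    have h₂ : s ≤ 2 * s₁ := by nlinarith
    rw [indicator_of_notMem (notMem_Ioi.mpr h₁), indicator_of_notMem (notMem_Ioi.mpr h₂)]
    nlinarith
  rcases le_or_gt s (2 * s₁) with h₂ | h₂
  · have hcos : 0 ≤ Real.cos (b * s) := by
      refine cos_nonneg_of_mem_Icc ⟨by linarith [pi_pos], ?_⟩
      nlinarith [mul_le_mul_of_nonneg_left h₂ hb]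
    rw [indicator_of_mem (mem_Ioi.mpr h₁), indicator_of_notMem (notMem_Ioi.mpr h₂)]
    nlinarith
  · rw [indicator_of_mem (mem_Ioi.mpr h₁), indicator_of_mem (mem_Ioi.mpr h₂)]
    nlinarith [neg_one_le_cos (b * s)]

def rayConst : ℝ := √2 / 2 * (1 - Real.exp (-(π / 4))) - Real.exp (-(π / 2))

lemma exp_neg_pi_div_four_lt_half : Real.exp (-(π / 4)) < 1 / 2 := by
  rw [Real.exp_neg, inv_lt_comm₀ (Real.exp_pos _) one_half_pos]
  have := quadratic_le_exp_of_nonneg (x := π / 4) (by positivity)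
  nlinarith [pi_gt_d2]

lemma rayConst_pos : 0 < rayConst := by
  have hsq : Real.exp (-(π / 2)) = Real.exp (-(π / 4)) ^ 2 := by
    rw [← Real.exp_nat_mul]; ring_nf
  have h2 : (1.4 : ℝ) < √2 := by rw [lt_sqrt (by norm_num)]; norm_num
  have := exp_neg_pi_div_four_lt_half
  rw [rayConst]
  nlinarith [Real.exp_pos (-(π / 4))]

lemma rayConst_le_one : rayConst ≤ 1 := by
  have : √2 < 2 := by rw [sqrt_lt' two_pos]; norm_num
  rw [rayConst]
  nlinarith [Real.exp_pos (-(π / 2)), Real.exp_pos (-(π / 4)), sqrt_nonneg 2]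

lemma rayConst_mul_setIntegral_dampedGaussian_le (hc : 0 < c) (hb : 0 ≤ b) :
    rayConst * ∫ s in Ioi 0, dampedGaussian c b s
      ≤ ∫ s in Ioi 0, dampedGaussian c b s * Real.cos (b * s) := by
  set J := ∫ s in Ioi 0, dampedGaussian c b s
  have hint := integrable_dampedGaussian hc b
  have hJ : 0 ≤ J := setIntegral_nonneg measurableSet_Ioi fun s _ => (dampedGaussian_pos c b s).le
  rcases hb.eq_or_lt with rfl | hb'
  · simpa using mul_le_mul_of_nonneg_right rayConst_le_one hJ
  have hs₁ : b * (π / (4 * b)) = π / 4 := by field_simp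
  set s₁ := π / (4 * b)
  have hT₁ := setIntegral_Ioi_dampedGaussian_le (b := b) hc (r := s₁) (by positivity)
  have hT₂ := setIntegral_Ioi_dampedGaussian_le (b := b) hc (r := 2 * s₁) (by positivity)
  rw [hs₁] at hT₁
  rw [mul_left_comm, hs₁, show 2 * (π / 4) = π / 2 by ring] at hT₂
  have hJ₀ : IntegrableOn (dampedGaussian c b) (Ioi 0) := hint.integrableOn
  have hT₁' : IntegrableOn ((Ioi s₁).indicator (dampedGaussian c b)) (Ioi 0) :=
    (hint.indicator measurableSet_Ioi).integrableOn
  have hT₂' : IntegrableOn ((Ioi (2 * s₁)).indicator (dampedGaussian c b)) (Ioi 0) :=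
    (hint.indicator measurableSet_Ioi).integrableOn
  calc _ ≤ √2 / 2 * J - √2 / 2 * (∫ s in Ioi s₁, dampedGaussian c b s)
          - ∫ s in Ioi (2 * s₁), dampedGaussian c b s := by
        rw [rayConst]
        nlinarith [sqrt_nonneg 2]
    _ = ∫ s in Ioi 0, (√2 / 2 * dampedGaussian c b s
          - √2 / 2 * (Ioi s₁).indicator (dampedGaussian c b) s
          - (Ioi (2 * s₁)).indicator (dampedGaussian c b) s) := by
        rw [integral_sub, integral_sub, integral_const_mul, integral_const_mul,
          setIntegral_indicator measurableSet_Ioi, setIntegral_indicator measurableSet_Ioi,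
          Ioi_inter_Ioi, Ioi_inter_Ioi, sup_eq_right.mpr (by positivity),
          sup_eq_right.mpr (by positivity)]
        exacts [hJ₀.const_mul _, hT₁'.const_mul _, (hJ₀.const_mul _).sub (hT₁'.const_mul _),
          hT₂']
    _ ≤ _ := setIntegral_mono_on (((hJ₀.const_mul _).sub (hT₁'.const_mul _)).sub hT₂')
          (hJ₀.mul_bdd (by fun_prop) (ae_of_all _ fun s => abs_cos_le_one (b * s)))
          measurableSet_Ioi fun s hs => sub_indicator_le_dampedGaussian_mul_cos hb hs₁ (le_of_lt hs)

end DampedGaussian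

section RayIntegral

lemma e4_eq_sqrt_two_div_two_mul : e4 = (√2 / 2 : ℝ) * (1 + Complex.I) := by
  rw [e4, mul_comm, Complex.exp_mul_I, ← Complex.ofReal_cos, ← Complex.ofReal_sin,
    cos_pi_div_four, sin_pi_div_four]
  ring

lemma e4_sq : e4 ^ 2 = Complex.I := by
  rw [e4_eq_sqrt_two_div_two_mul, mul_pow, ← Complex.ofReal_pow, div_pow,
    sq_sqrt zero_le_two, add_sq, Complex.I_sq]
  push_cast
  ring

lemma norm_e4 : ‖e4‖ = 1 := by
  rw [e4, mul_comm, Complex.norm_exp_ofReal_mul_I]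

def quadPhase (c a : ℝ) (v : ℂ) : ℂ := Complex.exp (Complex.I * c * (v ^ 2 + a * v))

def rayIntegral (c a : ℝ) (u : ℂ) : ℂ := ∫ s in Ioi (0 : ℝ), e4 * quadPhase c a (u + s * e4)

variable {c a : ℝ}

lemma quadPhase_mul_e4 (c a s : ℝ) :
    quadPhase c a (s * e4)
      = dampedGaussian c (c * a * (√2 / 2)) s
        * Complex.exp ((c * a * (√2 / 2) * s : ℝ) * Complex.I) := by
  rw [quadPhase, dampedGaussian, Complex.ofReal_exp, ← Complex.exp_add]
  congr 1
  rw [mul_pow, e4_sq, e4_eq_sqrt_two_div_two_mul]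
  push_cast
  linear_combination (c * s ^ 2 + c * a * s * √2 / 2 : ℂ) * Complex.I_sq

lemma norm_quadPhase_mul_e4 (c a s : ℝ) :
    ‖quadPhase c a (s * e4)‖ = dampedGaussian c (c * a * (√2 / 2)) s := by
  rw [quadPhase_mul_e4, norm_mul, Complex.norm_exp_ofReal_mul_I, mul_one, Complex.norm_real,
    Real.norm_of_nonneg (dampedGaussian_pos _ _ _).le]

lemma re_quadPhase_mul_e4 (c a s : ℝ) :
    (quadPhase c a (s * e4)).re
      = dampedGaussian c (c * a * (√2 / 2)) s * Real.cos (c * a * (√2 / 2) * s) := by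
  rw [quadPhase_mul_e4, Complex.re_ofReal_mul, Complex.exp_ofReal_mul_I_re]

lemma norm_rayIntegral_le (hc : 0 < c) (ha : 0 ≤ a) {r : ℝ} (hr : 0 ≤ r) :
    ‖rayIntegral c a (r * e4)‖ ≤ ∫ s in Ioi 0, dampedGaussian c (c * a * (√2 / 2)) s := by
  calc ‖rayIntegral c a (r * e4)‖
      ≤ ∫ s in Ioi 0, dampedGaussian c (c * a * (√2 / 2)) (s + r) := by
        refine (norm_integral_le_integral_norm _).trans_eq
          (setIntegral_congr_fun measurableSet_Ioi fun s _ => ?_)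
        rw [norm_mul, norm_e4, one_mul, ← norm_quadPhase_mul_e4]
        congr 2
        push_cast
        ring
    _ ≤ Real.exp (-(c * a * (√2 / 2) * r))
          * ∫ s in Ioi 0, dampedGaussian c (c * a * (√2 / 2)) s :=
        setIntegral_dampedGaussian_add_le hc hr
    _ ≤ ∫ s in Ioi 0, dampedGaussian c (c * a * (√2 / 2)) s := by
        refine mul_le_of_le_one_left (setIntegral_nonneg measurableSet_Ioi
          fun s _ => (dampedGaussian_pos _ _ s).le) ?_
        rw [Real.exp_le_one_iff, neg_nonpos]
        positivity

lemma setIntegral_mul_cos_le_norm_rayIntegral_zero (hc : 0 < c) :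
    ∫ s in Ioi 0, dampedGaussian c (c * a * (√2 / 2)) s * Real.cos (c * a * (√2 / 2) * s)
      ≤ ‖rayIntegral c a 0‖ := by
  have hint : IntegrableOn (fun s : ℝ => quadPhase c a (s * e4)) (Ioi 0) := by
    refine Integrable.mono' (integrable_dampedGaussian hc _).integrableOn
      (by unfold quadPhase; fun_prop) (ae_of_all _ fun s => (norm_quadPhase_mul_e4 c a s).le)
  have hrot :
      (starRingEnd ℂ) e4 * rayIntegral c a 0 = ∫ s in Ioi (0 : ℝ), quadPhase c a (s * e4) := by
    rw [rayIntegral, ← integral_const_mul]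
    refine setIntegral_congr_fun measurableSet_Ioi fun s _ => ?_
    rw [zero_add, ← mul_assoc, ← Complex.normSq_eq_conj_mul_self, Complex.normSq_eq_norm_sq,
      norm_e4]
    simp
  calc _ = ((starRingEnd ℂ) e4 * rayIntegral c a 0).re := by
        rw [hrot, ← RCLike.re_eq_complex_re, ← integral_re hint]
        simp only [RCLike.re_eq_complex_re, re_quadPhase_mul_e4]
    _ ≤ ‖(starRingEnd ℂ) e4 * rayIntegral c a 0‖ := Complex.re_le_norm _
    _ = ‖rayIntegral c a 0‖ := by rw [norm_mul, Complex.norm_conj, norm_e4, one_mul]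

lemma norm_rayIntegral_le_mul_norm_rayIntegral_zero (hc : 0 < c) (ha : 0 ≤ a) {r : ℝ}
    (hr : 0 ≤ r) : ‖rayIntegral c a (r * e4)‖ ≤ rayConst⁻¹ * ‖rayIntegral c a 0‖ := by
  rw [le_inv_mul_iff₀ rayConst_pos]
  calc rayConst * ‖rayIntegral c a (r * e4)‖
      ≤ rayConst * ∫ s in Ioi 0, dampedGaussian c (c * a * (√2 / 2)) s :=
        mul_le_mul_of_nonneg_left (norm_rayIntegral_le hc ha hr) rayConst_pos.le
    _ ≤ _ := rayConst_mul_setIntegral_dampedGaussian_le hc (by positivity)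
    _ ≤ _ := setIntegral_mul_cos_le_norm_rayIntegral_zero hc

end RayIntegral

lemma Phi_eq_rayIntegral (δ t Λ : ℝ) :
    Phi δ t Λ = rayIntegral (lamc δ t * t / 2) (2 * Real.log (1 + Λ) / (1 + lamc δ t)) :=
  rfl

lemma lamc_pos {δ t : ℝ} (hδ : δ < 1) (ht : 1 < t) : 0 < lamc δ t :=
  have h := Real.rpow_lt_one_of_one_lt_of_neg ht (sub_neg.mpr hδ)
  div_pos (Real.rpow_pos_of_pos (by linarith) _) (sub_pos.mpr h)

theorem stmt_7_general (δ : ℝ) (hδ1 : δ < 1) :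
    ∃ C₁ > 0, ∀ t Λ : ℝ, 1 < t → 0 ≤ Λ → Λ ≤ (t ^ (1 - δ) - 1) / lamc δ t - 1 →
      ∀ r : ℝ, 0 < r →
        ‖Phi δ t Λ ((r : ℂ) * e4)‖ ≤ C₁ * ‖Phi δ t Λ 0‖ := by
  refine ⟨rayConst⁻¹, inv_pos.mpr rayConst_pos, fun t Λ ht hΛ _ r hr => ?_⟩
  have hlam := lamc_pos hδ1 ht
  have hc : 0 < lamc δ t * t / 2 := by positivity
  have ha : 0 ≤ 2 * Real.log (1 + Λ) / (1 + lamc δ t) :=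
    div_nonneg (mul_nonneg zero_le_two (Real.log_nonneg (by linarith))) (by linarith)
  rw [Phi_eq_rayIntegral]
  exact norm_rayIntegral_le_mul_norm_rayIntegral_zero hc ha hr.le

/-- `|Φ(r e^{iπ/4})| ≤ C₁·|Φ(0)|` uniformly in `t`, `Λ` and `r`. -/
theorem stmt_7 (δ : ℝ) (hδ0 : 0 < δ) (hδ1 : δ < 1) :
    ∃ C₁ > 0, ∀ t Λ : ℝ, 1 < t → 0 ≤ Λ → Λ ≤ (t ^ (1 - δ) - 1) / lamc δ t - 1 →
      ∀ r : ℝ, 0 < r →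
        ‖Phi δ t Λ ((r : ℂ) * e4)‖ ≤ C₁ * ‖Phi δ t Λ 0‖ :=
  stmt_7_general δ hδ1
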